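/- arXiv:2008.07576 — 3 statements merged into one kernel-verified Lean document; each statement's English description precedes it below -/
import Mathlib

section
/- For x, z ∈ ℝ³ with x ≠ z, and λ > 0, define G(λ, x, z) = (e^{iλ(|x−z| − |x|)} − 1)·(1 − e^{(−1−i)λ|x−z|}) / (8π λ |x−z|). Then there is a constant C such that for all 0 < λ ≤ 1, all x ≠ z, and each k = 0, 1, 2, the k-th partial derivative in λ satisfies |∂_λ^k G(λ, x, z)| ≤ C ⟨z⟩^{k+1} / (|x−z| λ^k). -/
/-!
Up to the factor `-(8π|x - z|)⁻¹`, `G(λ)` is the product of `1/λ`, `e^{iaλ} - 1` with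
`a = |x - z| - |x|`, and `e^{-(1+i)|x - z|λ} - 1`. Since `|a| ≤ |z| ≤ ⟨z⟩`, at `λ ∈ (0, 1]` the `j`-th
derivatives of these three factors are bounded by `j! λ^{-j-1}`, `λ⟨z⟩ j! (⟨z⟩/λ)^j` and
`2 j! (2/λ)^j` (the last because `s^j e^{-s} ≤ j!`). Bounds of the shape `a j! A^j` and `b j! B^j`
combine under the Leibniz rule into `a b n! (A + B)^n`, which yields
`|∂_λ^n G| ≤ n! 4^n ⟨z⟩^{n+1} / (|x - z| λ^n)` for every `n`.
-/

open MeasureTheory Real Set Complex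

noncomputable section

abbrev E3 := EuclideanSpace ℝ (Fin 3)

/-- Japanese bracket on ℝ³. -/
def jap (x : E3) : ℝ := Real.sqrt (1 + ‖x‖ ^ 2)

/-- The auxiliary function `G(λ, x, z)`. -/
def G (l : ℝ) (x z : E3) : ℂ :=
  (Complex.exp (Complex.I * l * (‖x - z‖ - ‖x‖)) - 1) *
    (1 - Complex.exp ((-1 - Complex.I) * l * ‖x - z‖)) / (8 * Real.pi * l * ‖x - z‖)

open scoped Nat

theorem norm_iteratedDeriv_smul_le_of_factorial_bound
    {𝕜 𝕜' F : Type*} [NontriviallyNormedField 𝕜] [NormedField 𝕜'] [NormedAlgebra 𝕜 𝕜']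
    [NormedAddCommGroup F] [NormedSpace 𝕜 F] [NormedSpace 𝕜' F] [IsScalarTower 𝕜 𝕜' F]
    {f : 𝕜 → 𝕜'} {g : 𝕜 → F} {s : Set 𝕜} {x : 𝕜} {n : ℕ} {a b A B : ℝ}
    (hs : IsOpen s) (hx : x ∈ s) (hf : ContDiffOn 𝕜 n f s) (hg : ContDiffOn 𝕜 n g s)
    (hA : 0 ≤ A) (hB : 0 ≤ B)
    (hfb : ∀ i ≤ n, ‖iteratedDeriv i f x‖ ≤ a * i ! * A ^ i)
    (hgb : ∀ i ≤ n, ‖iteratedDeriv i g x‖ ≤ b * i ! * B ^ i) :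
    ‖iteratedDeriv n (fun y => f y • g y) x‖ ≤ a * b * n ! * (A + B) ^ n := by
  have ha : 0 ≤ a := by simpa using (norm_nonneg _).trans (hfb 0 n.zero_le)
  have hb : 0 ≤ b := by simpa using (norm_nonneg _).trans (hgb 0 n.zero_le)
  simp only [← iteratedDerivWithin_of_isOpen hs hx,
    ← norm_iteratedFDerivWithin_eq_norm_iteratedDerivWithin] at hfb hgb ⊢
  calc _ ≤ ∑ i ∈ Finset.range (n + 1), (n.choose i : ℝ) * ‖iteratedFDerivWithin 𝕜 i f s x‖ *
        ‖iteratedFDerivWithin 𝕜 (n - i) g s x‖ :=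
        norm_iteratedFDerivWithin_smul_le hf hg hs.uniqueDiffOn hx le_rfl
    _ ≤ ∑ i ∈ Finset.range (n + 1), (n.choose i : ℝ) * (a * i ! * A ^ i) *
        (b * (n - i) ! * B ^ (n - i)) := by
      gcongr with i hi
      · exact hfb i (by grind)
      · exact hgb (n - i) (by grind)
    _ = a * b * n ! * ∑ i ∈ Finset.range (n + 1), A ^ i * B ^ (n - i) := by
      rw [Finset.mul_sum]
      refine Finset.sum_congr rfl fun i hi => ?_
      have := Nat.choose_mul_factorial_mul_factorial (Finset.mem_range_succ_iff.mp hi)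
      rw [← Nat.cast_inj (R := ℝ)] at this
      push_cast at this
      linear_combination (a * b * A ^ i * B ^ (n - i)) * this
    _ ≤ a * b * n ! * ∑ i ∈ Finset.range (n + 1), A ^ i * B ^ (n - i) * n.choose i := by
      refine mul_le_mul_of_nonneg_left (Finset.sum_le_sum fun i hi => ?_)
        (mul_nonneg (mul_nonneg ha hb) (Nat.cast_nonneg _))
      exact le_mul_of_one_le_right (by positivity)
        (Nat.one_le_cast.mpr (Nat.choose_pos (Finset.mem_range_succ_iff.mp hi)))
    _ = a * b * n ! * (A + B) ^ n := by rw [add_pow]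

theorem iteratedDeriv_cexp_const_mul_ofReal (c : ℂ) (n : ℕ) :
    iteratedDeriv n (fun t : ℝ => cexp (c * t)) = fun t : ℝ => c ^ n * cexp (c * t) := by
  induction n with
  | zero => simp
  | succ n ih =>
    ext t
    rw [iteratedDeriv_succ, ih]
    have := (((hasDerivAt_id t).ofReal_comp.const_mul c).cexp).const_mul (c ^ n)
    simp only [id, ofReal_one, mul_one] at this
    rw [this.deriv]
    ring

theorem iteratedDeriv_succ_cexp_const_mul_ofReal_sub_one (c : ℂ) (n : ℕ) :
    iteratedDeriv (n + 1) (fun t : ℝ => cexp (c * t) - 1) =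
      fun t : ℝ => c ^ (n + 1) * cexp (c * t) := by
  rw [iteratedDeriv_succ', ← iteratedDeriv_cexp_const_mul_ofReal, iteratedDeriv_succ']
  congr 1
  ext t
  exact deriv_sub_const 1

theorem contDiff_cexp_const_mul_ofReal_sub_one (c : ℂ) {n : WithTop ℕ∞} :
    ContDiff ℝ n (fun t : ℝ => cexp (c * t) - 1) :=
  ((contDiff_const.mul ofRealCLM.contDiff).cexp).sub contDiff_const

theorem norm_iteratedDeriv_inv_const_mul {𝕜 : Type*} [RCLike 𝕜] (c t : 𝕜) (n : ℕ) :
    ‖iteratedDeriv n (fun s => (c * s)⁻¹) t‖ = n ! / (‖c‖ * ‖t‖ ^ (n + 1)) := by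
  have := iter_deriv_inv_linear n c 0
  simp only [add_zero] at this
  rw [iteratedDeriv_eq_iterate, this]
  have hn : (-1 - n : ℤ) = -((n + 1 : ℕ) : ℤ) := by push_cast; ring
  rcases eq_or_ne c 0 with rfl | hc
  · cases n <;> simp
  have hc' : ‖c‖ ≠ 0 := norm_ne_zero_iff.mpr hc
  simp only [hn, zpow_neg, zpow_natCast, norm_mul, norm_pow, norm_neg, norm_one,
    one_pow, one_mul, norm_inv, RCLike.norm_natCast, mul_pow, mul_inv]
  field_simp
  ring

theorem pow_mul_exp_neg_le_factorial {x : ℝ} (hx : 0 ≤ x) (n : ℕ) : x ^ n * rexp (-x) ≤ n ! := by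
  rw [Real.exp_neg, ← div_eq_mul_inv, div_le_iff₀ (exp_pos x)]
  exact (div_le_iff₀' (by positivity)).mp (Real.pow_div_factorial_le_exp x hx n)

theorem norm_iteratedDeriv_cexp_I_mul_sub_one_le {a Z t : ℝ} (haZ : |a| ≤ Z) (hZ : 1 ≤ Z)
    (ht : 0 < t) (ht1 : t ≤ 1) (n : ℕ) :
    ‖iteratedDeriv n (fun s : ℝ => cexp (I * a * s) - 1) t‖ ≤ t * Z * n ! * (Z / t) ^ n := by
  cases n with
  | zero =>
    calc ‖iteratedDeriv 0 (fun s : ℝ => cexp (I * a * s) - 1) t‖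
        = ‖cexp (I * ↑(a * t)) - 1‖ := by simp [mul_assoc]
      _ ≤ ‖a * t‖ := norm_exp_I_mul_ofReal_sub_one_le
      _ ≤ t * Z * (0 ! : ℕ) * (Z / t) ^ 0 := by
        rw [norm_mul, norm_of_nonneg ht.le, Real.norm_eq_abs]
        simpa [mul_comm t] using mul_le_mul_of_nonneg_right haZ ht.le
  | succ n =>
    have hfac : t ^ n ≤ Z * (n + 1) ! :=
      (pow_le_one₀ ht.le ht1).trans
        (one_le_mul_of_one_le_of_one_le hZ (Nat.one_le_cast.mpr (Nat.factorial_pos _)))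
    calc ‖iteratedDeriv (n + 1) (fun s : ℝ => cexp (I * a * s) - 1) t‖
        = |a| ^ (n + 1) := by
          simp [iteratedDeriv_succ_cexp_const_mul_ofReal_sub_one, norm_exp]
      _ ≤ Z ^ (n + 1) := pow_le_pow_left₀ (abs_nonneg a) haZ _
      _ ≤ Z ^ (n + 1) * (Z * (n + 1) ! / t ^ n) :=
        le_mul_of_one_le_right (by positivity) ((one_le_div (by positivity)).mpr hfac)
      _ = t * Z * (n + 1) ! * (Z / t) ^ (n + 1) := by
        rw [div_pow]
        field_simp
        ring

theorem norm_iteratedDeriv_cexp_damped_sub_one_le {r t : ℝ} (hr : 0 ≤ r) (ht : 0 < t) (n : ℕ) :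
    ‖iteratedDeriv n (fun s : ℝ => cexp ((-1 - I) * r * s) - 1) t‖ ≤ 2 * n ! * (2 / t) ^ n := by
  have hexp : ‖cexp ((-1 - I) * r * t)‖ = rexp (-(r * t)) := by simp [norm_exp]
  cases n with
  | zero =>
    calc ‖iteratedDeriv 0 (fun s : ℝ => cexp ((-1 - I) * r * s) - 1) t‖
        ≤ ‖cexp ((-1 - I) * r * t)‖ + ‖(1 : ℂ)‖ := norm_sub_le _ _
      _ ≤ 1 + 1 := by
        rw [hexp, norm_one]
        gcongr
        exact exp_le_one_iff.mpr (by nlinarith)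
      _ = 2 * (0 ! : ℕ) * (2 / t) ^ 0 := by norm_num
  | succ n =>
    have hc : ‖(-1 - I) * (r : ℂ)‖ ≤ 2 * r := by
      rw [norm_mul, norm_real, norm_of_nonneg hr]
      gcongr
      calc ‖-1 - I‖ ≤ ‖(-1 : ℂ)‖ + ‖I‖ := norm_sub_le _ _
        _ = 2 := by norm_num
    calc ‖iteratedDeriv (n + 1) (fun s : ℝ => cexp ((-1 - I) * r * s) - 1) t‖
        = ‖(-1 - I) * (r : ℂ)‖ ^ (n + 1) * rexp (-(r * t)) := by
          rw [iteratedDeriv_succ_cexp_const_mul_ofReal_sub_one, norm_mul, norm_pow, hexp]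
      _ ≤ (2 * r) ^ (n + 1) * rexp (-(r * t)) := by gcongr
      _ = (2 / t) ^ (n + 1) * ((r * t) ^ (n + 1) * rexp (-(r * t))) := by
          rw [div_pow, mul_pow, mul_pow]
          field_simp [ht.ne']
      _ ≤ (2 / t) ^ (n + 1) * (n + 1) ! :=
        mul_le_mul_of_nonneg_left (pow_mul_exp_neg_le_factorial (by positivity) _) (by positivity)
      _ ≤ 2 * (n + 1) ! * (2 / t) ^ (n + 1) := by
          rw [mul_assoc, mul_comm ((2 / t) ^ (n + 1))]
          exact le_mul_of_one_le_left (by positivity) one_le_two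

theorem norm_le_jap (z : E3) : ‖z‖ ≤ jap z :=
  Real.le_sqrt_of_sq_le (by linarith)

theorem one_le_jap (z : E3) : 1 ≤ jap z :=
  Real.le_sqrt_of_sq_le (by nlinarith [sq_nonneg ‖z‖])

theorem abs_norm_sub_sub_norm_le_jap (x z : E3) : |‖x - z‖ - ‖x‖| ≤ jap z := by
  calc |‖x - z‖ - ‖x‖| ≤ ‖x - z - x‖ := abs_norm_sub_norm_le _ _
    _ = ‖z‖ := by rw [sub_sub_cancel_left, norm_neg]
    _ ≤ jap z := norm_le_jap z

theorem G_eq_smul_mul (x z : E3) :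
    (fun t => G t x z) = fun t : ℝ => (-(8 * π * ‖x - z‖) * t)⁻¹ •
      ((cexp (I * ↑(‖x - z‖ - ‖x‖) * t) - 1) * (cexp ((-1 - I) * ‖x - z‖ * t) - 1)) := by
  ext t
  simp only [G, Complex.real_smul]
  rw [mul_right_comm I, mul_right_comm (-1 - I)]
  push_cast
  ring

theorem norm_iteratedDeriv_G_le {l : ℝ} (hl : 0 < l) (hl1 : l ≤ 1) {x z : E3} (hxz : x ≠ z)
    (n : ℕ) :
    ‖iteratedDeriv n (fun t => G t x z) l‖ ≤ n ! * 4 ^ n * jap z ^ (n + 1) / (‖x - z‖ * l ^ n) := by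
  set r := ‖x - z‖
  set Z := jap z
  have hr : 0 < r := norm_pos_iff.mpr (sub_ne_zero.mpr hxz)
  have hZ : 1 ≤ Z := one_le_jap z
  have hprod : ∀ i ≤ n, ‖iteratedDeriv i (fun t : ℝ =>
      (cexp (I * ↑(r - ‖x‖) * t) - 1) * (cexp ((-1 - I) * r * t) - 1)) l‖ ≤
        l * Z * 2 * i ! * (Z / l + 2 / l) ^ i := fun i _ => by
    simpa only [smul_eq_mul] using norm_iteratedDeriv_smul_le_of_factorial_bound isOpen_Ioi hl
      (contDiff_cexp_const_mul_ofReal_sub_one _).contDiffOn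
      (contDiff_cexp_const_mul_ofReal_sub_one _).contDiffOn (by positivity) (by positivity)
      (fun j _ => norm_iteratedDeriv_cexp_I_mul_sub_one_le (abs_norm_sub_sub_norm_le_jap x z)
        hZ hl hl1 j)
      (fun j _ => norm_iteratedDeriv_cexp_damped_sub_one_le hr.le hl j)
  have hinv : ∀ i ≤ n, ‖iteratedDeriv i (fun t : ℝ => (-(8 * π * r) * t)⁻¹) l‖ ≤
      (8 * π * r * l)⁻¹ * i ! * (1 / l) ^ i := fun i _ => by
    rw [norm_iteratedDeriv_inv_const_mul, norm_neg, norm_of_nonneg (by positivity),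
      norm_of_nonneg hl.le, div_pow, one_pow]
    field_simp
    exact (pow_succ' l i).ge
  have hinv_smooth : ContDiffOn ℝ n (fun t : ℝ => (-(8 * π * r) * t)⁻¹) (Ioi 0) :=
    (contDiff_const.mul contDiff_id).contDiffOn.inv fun t ht =>
      mul_ne_zero (by simp [hr.ne', pi_ne_zero]) (ne_of_gt ht)
  rw [G_eq_smul_mul]
  calc _ ≤ (8 * π * r * l)⁻¹ * (l * Z * 2) * n ! * (1 / l + (Z / l + 2 / l)) ^ n :=
        norm_iteratedDeriv_smul_le_of_factorial_bound isOpen_Ioi hl hinv_smooth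
          ((contDiff_cexp_const_mul_ofReal_sub_one _).mul
            (contDiff_cexp_const_mul_ofReal_sub_one _)).contDiffOn
          (by positivity) (by positivity) hinv hprod
    _ ≤ Z / r * n ! * (4 * Z / l) ^ n := by
      have hconst : (8 * π * r * l)⁻¹ * (l * Z * 2) ≤ Z / r := by
        rw [show (8 * π * r * l)⁻¹ * (l * Z * 2) = Z / r / (4 * π) by field_simp; ring]
        exact div_le_self (by positivity) (by nlinarith [pi_gt_three])
      have hrate : 1 / l + (Z / l + 2 / l) ≤ 4 * Z / l := by
        rw [show 1 / l + (Z / l + 2 / l) = (Z + 3) / l by field_simp; ring]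
        gcongr
        linarith
      gcongr
    _ = n ! * 4 ^ n * Z ^ (n + 1) / (r * l ^ n) := by
      rw [div_pow, mul_pow]
      field_simp
      ring

theorem stmt6 :
    ∃ C : ℝ, ∀ (l : ℝ), 0 < l → l ≤ 1 → ∀ (x z : E3), x ≠ z → ∀ k : ℕ, k ≤ 2 →
      ‖iteratedDeriv k (fun t : ℝ => G t x z) l‖
        ≤ C * jap z ^ (k + 1) / (‖x - z‖ * l ^ k) := by
  refine ⟨32, fun l hl hl1 x z hxz k hk => ?_⟩
  calc _ ≤ k ! * 4 ^ k * jap z ^ (k + 1) / (‖x - z‖ * l ^ k) :=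
        norm_iteratedDeriv_G_le hl hl1 hxz k
    _ ≤ 32 * jap z ^ (k + 1) / (‖x - z‖ * l ^ k) := by
      have hfac : (k ! * 4 ^ k : ℝ) ≤ 32 := by interval_cases k <;> norm_num [Nat.factorial]
      gcongr
      exact pow_nonneg (zero_le_one.trans (one_le_jap z)) _
end
end

section
/- Fix σ ∈ {+1, −1}. For A > 0 and λ > 0, let h(λ) = (1 − e^{(−1 + σ i) λ A}) / A. Then: (i) |h(λ)| ≤ C λ / ⟨λA⟩ for a universal constant C; and (ii) for every integer j ≥ 1 and every N ≥ 0 there is a constant C_{j,N} such that |h^{(j)}(λ)| ≤ C_{j,N} A^{j−1} / ⟨λA⟩^N. -/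
/-!
Write `h(λ) = (1 - e^{cλA}) / A` with `c = -1 + σi`, so that `Re c < 0`.
For (i), `|1 - e^w| ≤ 2 min(|w|, 1)` when `Re w ≤ 0`, and `min(Kt, 1) ⟨t⟩ ≲ t` for `t = λA ≥ 0`.
For (ii), `h^{(j)}(λ) = -c^j A^{j-1} e^{cλA}`, so `|h^{(j)}(λ)| = |c|^j A^{j-1} e^{Re c · λA}`,
and the exponential decay absorbs any power of `⟨λA⟩` because `1 + t ≤ (1 + 1/a) e^{at}` for `a > 0`.
-/

open Real Complex

noncomputable section

/-- Japanese bracket on ℝ. -/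
def japR (t : ℝ) : ℝ := Real.sqrt (1 + t ^ 2)

lemma japR_pos (t : ℝ) : 0 < japR t := Real.sqrt_pos.mpr (by positivity)

lemma japR_le_one_add {t : ℝ} (ht : 0 ≤ t) : japR t ≤ 1 + t :=
  Real.sqrt_le_iff.mpr ⟨by linarith, by nlinarith⟩

lemma min_mul_japR_le {K t : ℝ} (hK : 0 ≤ K) (ht : 0 ≤ t) :
    min (K * t) 1 * japR t ≤ 2 * (K + 1) * t := by
  have hJ := japR_le_one_add ht
  rcases le_total t 1 with h | h
  · calc min (K * t) 1 * japR t ≤ K * t * 2 :=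
          mul_le_mul (min_le_left _ _) (by linarith) (japR_pos t).le (by positivity)
      _ ≤ 2 * (K + 1) * t := by nlinarith
  · calc min (K * t) 1 * japR t ≤ 1 * (2 * t) :=
          mul_le_mul (min_le_right _ _) (by linarith) (japR_pos t).le zero_le_one
      _ ≤ 2 * (K + 1) * t := by nlinarith

lemma exists_japR_rpow_le_mul_exp {κ N : ℝ} (hκ : 0 < κ) (hN : 0 ≤ N) :
    ∃ D, ∀ t, 0 ≤ t → japR t ^ N ≤ D * Real.exp (κ * t) := by
  set a := κ / (N + 1)
  have ha : 0 < a := by positivity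
  have haN : a * N ≤ κ := by
    rw [div_mul_eq_mul_div, div_le_iff₀ (by positivity)]; nlinarith
  refine ⟨(1 + 1 / a) ^ N, fun t ht => ?_⟩
  have hlin : 1 + t ≤ (1 + 1 / a) * Real.exp (a * t) := by
    calc 1 + t ≤ (1 + 1 / a) * (1 + a * t) := by
          field_simp; nlinarith [mul_pos ha ha]
      _ ≤ (1 + 1 / a) * Real.exp (a * t) := by
          gcongr; linarith [Real.add_one_le_exp (a * t)]
  calc japR t ^ N ≤ ((1 + 1 / a) * Real.exp (a * t)) ^ N :=
        Real.rpow_le_rpow (japR_pos t).le ((japR_le_one_add ht).trans hlin) hN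
    _ = (1 + 1 / a) ^ N * Real.exp (a * N * t) := by
        rw [Real.mul_rpow (by positivity) (by positivity), ← Real.exp_mul]; ring_nf
    _ ≤ (1 + 1 / a) ^ N * Real.exp (κ * t) := by gcongr

lemma norm_one_sub_exp_le {w : ℂ} (hw : w.re ≤ 0) : ‖1 - exp w‖ ≤ 2 * min ‖w‖ 1 := by
  rcases le_total ‖w‖ 1 with h | h
  · rw [min_eq_left h, norm_sub_rev]
    exact norm_exp_sub_one_le h
  · rw [min_eq_right h, mul_one]
    calc ‖1 - exp w‖ ≤ ‖(1 : ℂ)‖ + ‖exp w‖ := norm_sub_le _ _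
      _ ≤ 2 := by
        rw [norm_one, norm_exp]
        linarith [Real.exp_le_one_iff.mpr hw]

lemma iteratedDeriv_cexp_ofReal_mul (c : ℂ) (n : ℕ) :
    iteratedDeriv n (fun t : ℝ => exp (c * t)) = fun t : ℝ => c ^ n * exp (c * t) := by
  induction n with
  | zero => simp
  | succ n ih =>
    funext t
    have hexp : HasDerivAt (fun t : ℝ => exp (c * t)) (c * exp (c * t)) t := by
      simpa [mul_comm] using ((hasDerivAt_id (t : ℂ)).const_mul c).cexp.comp_ofReal
    rw [iteratedDeriv_succ, ih, deriv_const_mul _ hexp.differentiableAt, hexp.deriv]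
    ring

lemma iteratedDeriv_succ_one_sub_cexp_div (c : ℂ) (A : ℝ) (n : ℕ) (l : ℝ) :
    iteratedDeriv (n + 1) (fun t : ℝ => (1 - exp (c * t * A)) / (A : ℂ)) l
      = -(c * A) ^ (n + 1) / A * exp (c * l * A) := by
  simp_rw [mul_right_comm c _ (A : ℂ)]
  rw [iteratedDeriv_div_const, iteratedDeriv_const_sub n.add_one_pos, iteratedDeriv_neg,
    iteratedDeriv_cexp_ofReal_mul]
  ring

lemma exists_norm_one_sub_cexp_div_le {c : ℂ} (hc : c.re ≤ 0) :
    ∃ C : ℝ, ∀ A : ℝ, 0 < A → ∀ l : ℝ, 0 < l →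
      ‖(1 - exp (c * l * A)) / (A : ℂ)‖ ≤ C * l / japR (l * A) := by
  refine ⟨4 * (‖c‖ + 1), fun A hA l hl => ?_⟩
  have hre : (c * l * A).re ≤ 0 := by
    simpa [mul_assoc] using mul_nonpos_of_nonpos_of_nonneg hc (mul_pos hl hA).le
  have hnorm : ‖c * l * A‖ = ‖c‖ * (l * A) := by
    rw [norm_mul, norm_mul, norm_real, norm_real, Real.norm_of_nonneg hl.le,
      Real.norm_of_nonneg hA.le, mul_assoc]
  rw [norm_div, norm_real, Real.norm_of_nonneg hA.le, div_le_div_iff₀ hA (japR_pos _)]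
  calc ‖1 - exp (c * l * A)‖ * japR (l * A) ≤ 2 * min (‖c‖ * (l * A)) 1 * japR (l * A) :=
        mul_le_mul_of_nonneg_right (hnorm ▸ norm_one_sub_exp_le hre) (japR_pos _).le
    _ ≤ 2 * (2 * (‖c‖ + 1) * (l * A)) := by
        rw [mul_assoc]
        exact mul_le_mul_of_nonneg_left (min_mul_japR_le (norm_nonneg c) (mul_pos hl hA).le)
          zero_le_two
    _ = 4 * (‖c‖ + 1) * l * A := by ring

lemma exists_norm_iteratedDeriv_one_sub_cexp_div_le {c : ℂ} (hc : c.re < 0) {j : ℕ} (hj : 1 ≤ j)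
    {N : ℝ} (hN : 0 ≤ N) :
    ∃ C : ℝ, ∀ A : ℝ, 0 < A → ∀ l : ℝ, 0 < l →
      ‖iteratedDeriv j (fun t : ℝ => (1 - exp (c * t * A)) / (A : ℂ)) l‖
        ≤ C * A ^ (j - 1) / japR (l * A) ^ N := by
  obtain ⟨n, rfl⟩ := Nat.exists_eq_add_of_le' hj
  obtain ⟨D, hD⟩ := exists_japR_rpow_le_mul_exp (neg_pos.mpr hc) hN
  refine ⟨‖c‖ ^ (n + 1) * D, fun A hA l hl => ?_⟩
  have hnorm : ‖iteratedDeriv (n + 1) (fun t : ℝ => (1 - exp (c * t * A)) / (A : ℂ)) l‖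
      = ‖c‖ ^ (n + 1) * A ^ n * Real.exp (c.re * (l * A)) := by
    rw [iteratedDeriv_succ_one_sub_cexp_div, norm_mul, norm_div, norm_neg, norm_pow, norm_mul,
      norm_real, Real.norm_of_nonneg hA.le, norm_exp]
    simp only [mul_assoc, mul_re, ofReal_re, ofReal_im, mul_zero, sub_zero, mul_im, zero_mul,
      add_zero]
    rw [mul_pow, pow_succ A]
    field_simp
  rw [hnorm, Nat.add_sub_cancel, le_div_iff₀ (rpow_pos_of_pos (japR_pos _) N)]
  calc ‖c‖ ^ (n + 1) * A ^ n * Real.exp (c.re * (l * A)) * japR (l * A) ^ N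
      ≤ ‖c‖ ^ (n + 1) * A ^ n * Real.exp (c.re * (l * A)) * (D * Real.exp (-c.re * (l * A))) := by
        gcongr
        exact hD _ (mul_pos hl hA).le
    _ = ‖c‖ ^ (n + 1) * D * A ^ n := by
        rw [neg_mul, Real.exp_neg]
        field_simp

theorem stmt8_general (σ : ℝ) :
    (∃ C : ℝ, ∀ (A : ℝ), 0 < A → ∀ (l : ℝ), 0 < l →
      ‖(1 - Complex.exp ((-1 + σ * Complex.I) * l * A)) / (A : ℂ)‖ ≤ C * l / japR (l * A)) ∧
    (∀ (j : ℕ), 1 ≤ j → ∀ (N : ℝ), 0 ≤ N → ∃ C : ℝ, ∀ (A : ℝ), 0 < A → ∀ (l : ℝ), 0 < l →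
      ‖iteratedDeriv j (fun t : ℝ => (1 - Complex.exp ((-1 + σ * Complex.I) * t * A)) / (A : ℂ)) l‖
        ≤ C * A ^ (j - 1) / japR (l * A) ^ N) := by
  have hre : (-1 + σ * I).re = -1 := by simp
  exact ⟨exists_norm_one_sub_cexp_div_le (by linarith),
    fun j hj N hN => exists_norm_iteratedDeriv_one_sub_cexp_div_le (by linarith) hj hN⟩

theorem stmt8 (σ : ℝ) (hσ : σ = 1 ∨ σ = -1) :
    (∃ C : ℝ, ∀ (A : ℝ), 0 < A → ∀ (l : ℝ), 0 < l →
      ‖(1 - Complex.exp ((-1 + σ * Complex.I) * l * A)) / (A : ℂ)‖ ≤ C * l / japR (l * A)) ∧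
    (∀ (j : ℕ), 1 ≤ j → ∀ (N : ℝ), 0 ≤ N → ∃ C : ℝ, ∀ (A : ℝ), 0 < A → ∀ (l : ℝ), 0 < l →
      ‖iteratedDeriv j (fun t : ℝ => (1 - Complex.exp ((-1 + σ * Complex.I) * t * A)) / (A : ℂ)) l‖
        ≤ C * A ^ (j - 1) / japR (l * A) ^ N) :=
  stmt8_general σ

end
end

section
/- Let χ : ℝ → ℝ be a smooth function with 0 ≤ χ ≤ 1, χ(λ) = 1 for 0 ≤ λ ≤ λ₀ and χ(λ) = 0 for λ ≥ 2λ₀, where 0 < λ₀ ≤ 1/4. Then there is a constant C such that for all x, y ∈ ℝ³ \ {0}, | ∫₀^∞ (e^{iλ|x|} − e^{−λ|x|})(e^{iλ|y|} − e^{−iλ|y|}) / (|x| |y|) · χ(λ) dλ | ≤ C / (⟨x⟩ ⟨y⟩). -/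
open MeasureTheory Real Set Complex
noncomputable section
lemma jap_pos (x : E3) : 0 < jap x := by
  have : (0:ℝ) < 1 + ‖x‖^2 := by positivity
  exact Real.sqrt_pos.mpr this

lemma factor_bound (lam r j : ℝ) (hl : 0 < lam) (hl' : lam ≤ 1/2) (hr : 0 < r)
    (hj : j = Real.sqrt (1 + r^2)) (w : ℂ)
    (hw1 : ‖Complex.exp w‖ ≤ 1) (hw2 : ‖w‖ ≤ lam * r) :
    ‖Complex.exp (Complex.I * lam * r) - Complex.exp w‖ / r ≤ 2 * Real.sqrt 2 / j := by
  have hjpos : 0 < j := by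
    rw [hj]; exact Real.sqrt_pos.mpr (by positivity)
  have hnorm1 : ‖Complex.exp (Complex.I * lam * r)‖ = 1 := by
    rw [Complex.norm_exp]
    simp
  rcases le_or_gt 1 r with h1 | h1
  · -- r ≥ 1
    have hb : ‖Complex.exp (Complex.I * lam * r) - Complex.exp w‖ ≤ 2 := by
      calc ‖Complex.exp (Complex.I * lam * r) - Complex.exp w‖
          ≤ ‖Complex.exp (Complex.I * lam * r)‖ + ‖Complex.exp w‖ := norm_sub_le _ _
        _ ≤ 2 := by rw [hnorm1]; linarith
    have hjle : j ≤ Real.sqrt 2 * r := by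
      rw [hj]
      have : (1 + r^2) ≤ 2 * r^2 := by nlinarith
      calc Real.sqrt (1 + r^2) ≤ Real.sqrt (2 * r^2) := Real.sqrt_le_sqrt this
        _ = Real.sqrt 2 * r := by
            rw [Real.sqrt_mul (by norm_num), Real.sqrt_sq hr.le]
    rw [div_le_div_iff₀ hr hjpos]
    nlinarith [norm_nonneg (Complex.exp (Complex.I * lam * r) - Complex.exp w)]
  · -- r < 1
    have hlr : lam * r ≤ 1 := by nlinarith
    have habs : ‖Complex.I * lam * r‖ = lam * r := by
      simp [map_mul, Complex.norm_real, abs_of_pos hl, abs_of_pos hr]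
    have hb1 : ‖Complex.exp (Complex.I * lam * r) - 1‖ ≤ 2 * (lam * r) := by
      have := Complex.norm_exp_sub_one_le (x := Complex.I * lam * r) (by rw [habs]; exact hlr)
      rw [habs] at this
      simpa using this
    have hb2 : ‖Complex.exp w - 1‖ ≤ 2 * (lam * r) := by
      have := Complex.norm_exp_sub_one_le (x := w) (le_trans hw2 hlr)
      have h2 : ‖w‖ ≤ lam * r := hw2
      calc ‖Complex.exp w - 1‖ ≤ 2 * ‖w‖ := this
        _ ≤ 2 * (lam * r) := by linarith
    have hb : ‖Complex.exp (Complex.I * lam * r) - Complex.exp w‖ ≤ 2 * r := by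
      calc ‖Complex.exp (Complex.I * lam * r) - Complex.exp w‖
          ≤ ‖Complex.exp (Complex.I * lam * r) - 1‖ + ‖Complex.exp w - 1‖ := by
            have := norm_sub_le (Complex.exp (Complex.I * lam * r) - 1) (Complex.exp w - 1)
            simpa using this
        _ ≤ 4 * (lam * r) := by linarith
        _ ≤ 2 * r := by nlinarith
    have hjle : j ≤ Real.sqrt 2 := by
      rw [hj]
      have : (1 + r^2) ≤ 2 := by nlinarith
      exact Real.sqrt_le_sqrt this
    rw [div_le_div_iff₀ hr hjpos]
    nlinarith [norm_nonneg (Complex.exp (Complex.I * lam * r) - Complex.exp w)]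

theorem stmt10 (lam0 : ℝ) (hlam0 : 0 < lam0) (hlam0' : lam0 ≤ 1 / 4)
    (χ : ℝ → ℝ) (hχ : ContDiff ℝ (⊤ : ℕ∞) χ) (hχ0 : ∀ l : ℝ, 0 ≤ χ l) (hχ1 : ∀ l : ℝ, χ l ≤ 1)
    (hχeq1 : ∀ l : ℝ, 0 ≤ l → l ≤ lam0 → χ l = 1)
    (hχeq0 : ∀ l : ℝ, 2 * lam0 ≤ l → χ l = 0) :
    ∃ C : ℝ, ∀ x y : E3, x ≠ 0 → y ≠ 0 →
      ‖∫ l in Set.Ioi (0 : ℝ),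
          (Complex.exp (Complex.I * l * ‖x‖) - Complex.exp (-(l : ℂ) * ‖x‖)) *
            (Complex.exp (Complex.I * l * ‖y‖) - Complex.exp (-(Complex.I * l * ‖y‖))) /
              ((‖x‖ : ℂ) * (‖y‖ : ℂ)) * (χ l : ℂ)‖
        ≤ C / (jap x * jap y) := by
  refine ⟨4, fun x y hx hy => ?_⟩
  set rx := ‖x‖ with hrx
  set ry := ‖y‖ with hry
  have hrxpos : 0 < rx := norm_pos_iff.mpr hx
  have hrypos : 0 < ry := norm_pos_iff.mpr hy
  have hjx : 0 < jap x := jap_pos x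
  have hjy : 0 < jap y := jap_pos y
  set M : ℝ := 8 / (jap x * jap y) with hM
  have hMpos : 0 < M := by positivity
  set g : ℝ → ℝ := (Set.Ioc (0:ℝ) (1/2)).indicator (fun _ => M) with hg
  have hgint : Integrable g (volume.restrict (Set.Ioi (0:ℝ))) := by
    apply Integrable.restrict
    rw [hg, integrable_indicator_iff measurableSet_Ioc]
    exact (integrableOn_const_iff (by finiteness)).mpr (Or.inr (by simp))
  have hbound : ∀ l ∈ Set.Ioi (0:ℝ),
      ‖(Complex.exp (Complex.I * l * rx) - Complex.exp (-(l : ℂ) * rx)) *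
            (Complex.exp (Complex.I * l * ry) - Complex.exp (-(Complex.I * l * ry))) /
              ((rx : ℂ) * (ry : ℂ)) * (χ l : ℂ)‖ ≤ g l := by
    intro l hl
    simp only [Set.mem_Ioi] at hl
    rcases le_or_gt l (1/2) with hl2 | hl2
    · have hgval : g l = M := by
        rw [hg, Set.indicator_of_mem (by exact ⟨hl, hl2⟩)]
      rw [hgval]
      have hfx : ‖Complex.exp (Complex.I * l * rx) - Complex.exp (-(l : ℂ) * rx)‖ / rx
          ≤ 2 * Real.sqrt 2 / jap x := by
        apply factor_bound l rx (jap x) hl hl2 hrxpos rfl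
        · rw [Complex.norm_exp]
          simp only [neg_mul, Complex.neg_re, Complex.mul_re, Complex.ofReal_re,
            Complex.ofReal_im, mul_zero, sub_zero]
          rw [Real.exp_le_one_iff]
          nlinarith
        · 
          simp [map_mul, Complex.norm_real, abs_of_pos hl, abs_of_pos hrxpos]
      have hfy : ‖Complex.exp (Complex.I * l * ry) - Complex.exp (-(Complex.I * l * ry))‖ / ry
          ≤ 2 * Real.sqrt 2 / jap y := by
        apply factor_bound l ry (jap y) hl hl2 hrypos rfl
        · rw [Complex.norm_exp]
          simp
        · 
          simp [map_mul, Complex.norm_real, abs_of_pos hl, abs_of_pos hrypos]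
      have hχl : |χ l| ≤ 1 := by rw [_root_.abs_of_nonneg (hχ0 l)]; exact hχ1 l
      rw [norm_mul, norm_div, norm_mul, norm_mul]
      have e1 : ‖(rx : ℂ)‖ = rx := by simp [abs_of_pos hrxpos]
      have e2 : ‖(ry : ℂ)‖ = ry := by simp [abs_of_pos hrypos]
      have e3 : ‖((χ l : ℝ) : ℂ)‖ = |χ l| := by simp [Complex.norm_real]
      rw [e1, e2, e3]
      have key : ‖Complex.exp (Complex.I * l * rx) - Complex.exp (-(l : ℂ) * rx)‖ *
          ‖Complex.exp (Complex.I * l * ry) - Complex.exp (-(Complex.I * l * ry))‖ / (rx * ry)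
          ≤ (2 * Real.sqrt 2 / jap x) * (2 * Real.sqrt 2 / jap y) := by
        rw [show ‖Complex.exp (Complex.I * l * rx) - Complex.exp (-(l : ℂ) * rx)‖ *
          ‖Complex.exp (Complex.I * l * ry) - Complex.exp (-(Complex.I * l * ry))‖ / (rx * ry)
          = (‖Complex.exp (Complex.I * l * rx) - Complex.exp (-(l : ℂ) * rx)‖ / rx) *
            (‖Complex.exp (Complex.I * l * ry) - Complex.exp (-(Complex.I * l * ry))‖ / ry)
          from (div_mul_div_comm _ _ _ _).symm]
        exact mul_le_mul hfx hfy (by positivity) (by positivity)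
      have hsq : (2 * Real.sqrt 2 / jap x) * (2 * Real.sqrt 2 / jap y) = M := by
        rw [hM]
        have : Real.sqrt 2 * Real.sqrt 2 = 2 := Real.mul_self_sqrt (by norm_num)
        field_simp
        nlinarith
      calc ‖Complex.exp (Complex.I * l * rx) - Complex.exp (-(l : ℂ) * rx)‖ *
            ‖Complex.exp (Complex.I * l * ry) - Complex.exp (-(Complex.I * l * ry))‖ / (rx * ry) * |χ l|
          ≤ ‖Complex.exp (Complex.I * l * rx) - Complex.exp (-(l : ℂ) * rx)‖ *
            ‖Complex.exp (Complex.I * l * ry) - Complex.exp (-(Complex.I * l * ry))‖ / (rx * ry) * 1 := by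
            apply mul_le_mul_of_nonneg_left hχl (by positivity)
        _ = _ := by rw [mul_one]
        _ ≤ M := by rw [← hsq] at *; exact key
    · have hχ0' : χ l = 0 := hχeq0 l (by linarith)
      have : ((χ l : ℝ) : ℂ) = 0 := by rw [hχ0']; simp
      rw [this, mul_zero, norm_zero, hg]
      exact Set.indicator_nonneg (fun _ _ => hMpos.le) l
  have hae : ∀ᵐ (l : ℝ) ∂(volume.restrict (Set.Ioi (0:ℝ))),
      ‖(Complex.exp (Complex.I * l * rx) - Complex.exp (-(l : ℂ) * rx)) *
            (Complex.exp (Complex.I * l * ry) - Complex.exp (-(Complex.I * l * ry))) /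
              ((rx : ℂ) * (ry : ℂ)) * (χ l : ℂ)‖ ≤ g l := by
    rw [ae_restrict_iff' measurableSet_Ioi]
    exact Filter.Eventually.of_forall hbound
  calc ‖∫ l in Set.Ioi (0 : ℝ),
          (Complex.exp (Complex.I * l * rx) - Complex.exp (-(l : ℂ) * rx)) *
            (Complex.exp (Complex.I * l * ry) - Complex.exp (-(Complex.I * l * ry))) /
              ((rx : ℂ) * (ry : ℂ)) * (χ l : ℂ)‖
      ≤ ∫ l in Set.Ioi (0 : ℝ), g l := norm_integral_le_of_norm_le hgint hae
    _ = 4 / (jap x * jap y) := by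
        rw [hg, integral_indicator measurableSet_Ioc]
        rw [Measure.restrict_restrict measurableSet_Ioc]
        have hss : Set.Ioc (0:ℝ) (1/2) ∩ Set.Ioi 0 = Set.Ioc (0:ℝ) (1/2) := by
          ext t; simp only [Set.mem_inter_iff, Set.mem_Ioc, Set.mem_Ioi, and_iff_left_iff_imp]
          exact fun h => h.1
        rw [hss, setIntegral_const, measureReal_def, Real.volume_Ioc]
        simp only [smul_eq_mul, hM]
        rw [ENNReal.toReal_ofReal (by norm_num)]
        ring
end
end
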